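/- For every integer g > 0 there exist infinitely many primes p such that: (i) p can be written as p = a² + 12 b² with a, b relatively prime integers, and every integer solution (a′, b′) of p = a′² + 12 b′² satisfies a′ = ±a and b′ = ±b; (ii) for every integer k with 0 < |k| ≤ g, the integer p + k has no primitive integer representation as a² + a b + b²; (iii) p has no primitive integer representation as 4(a² + a b + b²). -/

import Mathlib

/-!
A prime `q ≡ 2 (mod 3)` never divides a primitive value of `a² + ab + b²`: otherwise `a / b`
would be a primitive cube root of unity modulo `q`, forcing `3 ∣ q - 1`. Give each `k` with
`0 < |k| ≤ g` its own such prime `q_k > max(g, 12)`; by the Chinese remainder theorem and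
Dirichlet's theorem there are infinitely many primes `p ≡ 1 (mod 12)` with `q_k ∣ p + k` for all
these `k`. Since `-3` is a square mod such a `p`, Thue's lemma writes `p = x² + 3y²`, and
`p ≡ 1 (mod 4)` makes `y` even. Two representations
`p = x² + 12y² = u² + 12v²` satisfy `p² = (xu + 12yv)² + 12(xv - uy)²` and
`(xv - uy)(xv + uy) = p(v² - y²)`, so after changing the sign of `v` we get `xv = uy`, whence
`(u, v) = ±(x, y)`.
-/

lemma ZMod.mod_three_ne_two_of_sq_add_self_add_one_eq_zero {q : ℕ} [Fact q.Prime] {t : ZMod q}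
    (ht : t ^ 2 + t + 1 = 0) : q % 3 ≠ 2 := by
  have ht3 : t ^ 3 = 1 := by linear_combination (t - 1) * ht
  by_cases ht1 : t = 1
  · subst ht1
    have h3 : ((3 : ℕ) : ZMod q) = 0 := by push_cast; linear_combination ht
    have := (Nat.prime_dvd_prime_iff_eq Fact.out Nat.prime_three).mp
      ((ZMod.natCast_eq_zero_iff 3 q).mp h3)
    omega
  · have : Fact (Nat.Prime 3) := ⟨Nat.prime_three⟩
    have ht0 : t ≠ 0 := by rintro rfl; norm_num at ht3
    have := orderOf_eq_prime ht3 ht1 ▸ ZMod.orderOf_dvd_card_sub_one ht0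
    omega

lemma Nat.Prime.mod_three_ne_two_of_dvd_sq_add_mul_add_sq {q : ℕ} (hq : q.Prime) {x y : ℤ}
    (hxy : Int.gcd x y = 1) (hdvd : (q : ℤ) ∣ x ^ 2 + x * y + y ^ 2) : q % 3 ≠ 2 := by
  have := Fact.mk hq
  have h0 : (x : ZMod q) ^ 2 + x * y + y ^ 2 = 0 := by
    exact_mod_cast (ZMod.intCast_zmod_eq_zero_iff_dvd _ q).mpr hdvd
  have hy : (y : ZMod q) ≠ 0 := by
    intro hy
    have hx : (x : ZMod q) = 0 := by simpa [hy] using h0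
    simp only [ZMod.intCast_zmod_eq_zero_iff_dvd] at hx hy
    exact hq.not_isUnit (Int.ofNat_isUnit.mp
      ((Int.isCoprime_iff_gcd_eq_one.mpr hxy).isUnit_of_dvd' hx hy))
  refine ZMod.mod_three_ne_two_of_sq_add_self_add_one_eq_zero (t := x / y) ?_
  field_simp
  linear_combination h0

/-- Thue's lemma. -/
lemma ZMod.exists_abs_le_sqrt_and_intCast_eq_mul (n : ℕ) [NeZero n] (c : ZMod n) :
    ∃ x y : ℤ, (x ≠ 0 ∨ y ≠ 0) ∧ |x| ≤ n.sqrt ∧ |y| ≤ n.sqrt ∧ (x : ZMod n) = c * y := by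
  have hcard : Fintype.card (ZMod n) < Fintype.card (Fin (n.sqrt + 1) × Fin (n.sqrt + 1)) := by
    simpa [ZMod.card] using Nat.lt_succ_sqrt n
  obtain ⟨⟨i, j⟩, ⟨i', j'⟩, hne, heq⟩ := Fintype.exists_ne_map_eq_of_card_lt
    (fun ij : Fin (n.sqrt + 1) × Fin (n.sqrt + 1) => ((ij.1 : ℕ) : ZMod n) - c * (ij.2 : ℕ)) hcard
  refine ⟨(i : ℕ) - (i' : ℕ), (j : ℕ) - (j' : ℕ), ?_, ?_, ?_, ?_⟩
  · by_contra! h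
    exact hne (Prod.ext (Fin.ext (by dsimp only; omega)) (Fin.ext (by dsimp only; omega)))
  · exact abs_sub_le_iff.mpr ⟨by omega, by omega⟩
  · exact abs_sub_le_iff.mpr ⟨by omega, by omega⟩
  · push_cast
    linear_combination heq

lemma Nat.Prime.sqrt_sq_lt {p : ℕ} (hp : p.Prime) : p.sqrt ^ 2 < p := by
  refine (Nat.sqrt_le' p).lt_of_ne fun h => hp.one_lt.ne' ?_
  have := Nat.isUnit_iff.mp (hp.prime.squarefree p.sqrt ⟨1, by rw [mul_one, ← sq, h]⟩)
  rw [← h, this, one_pow]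

lemma Nat.Prime.exists_sq_add_three_mul_sq {p : ℕ} (hp : p.Prime) (hp2 : p ≠ 2)
    (h : IsSquare (-3 : ZMod p)) : ∃ x y : ℤ, (p : ℤ) = x ^ 2 + 3 * y ^ 2 := by
  have := Fact.mk hp
  obtain ⟨c, hc⟩ := h
  obtain ⟨x, y, hxy0, hx, hy, hcxy⟩ := ZMod.exists_abs_le_sqrt_and_intCast_eq_mul p c
  obtain ⟨s, hs⟩ : (p : ℤ) ∣ x ^ 2 + 3 * y ^ 2 := by
    rw [← ZMod.intCast_zmod_eq_zero_iff_dvd]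
    push_cast
    rw [hcxy]
    linear_combination -(y : ZMod p) ^ 2 * hc
  have hpos : 0 < x ^ 2 + 3 * y ^ 2 := by
    rcases hxy0 with h | h <;> positivity
  have hlt : x ^ 2 + 3 * y ^ 2 < 4 * p := by
    have hsq : ((p.sqrt : ℕ) : ℤ) ^ 2 < p := by exact_mod_cast hp.sqrt_sq_lt
    nlinarith [sq_le_sq' (abs_le.mp hx).1 (abs_le.mp hx).2,
      sq_le_sq' (abs_le.mp hy).1 (abs_le.mp hy).2]
  have hp0 : (0 : ℤ) < p := by exact_mod_cast hp.pos
  obtain ⟨hs0, hs4⟩ : 0 < s ∧ s < 4 := ⟨by nlinarith, by nlinarith⟩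
  interval_cases s
  · exact ⟨x, y, by linarith⟩
  · -- `x² + 3y² ≢ 2 (mod 4)`, so `4 ∣ 2p`
    have key : ∀ a b c : ZMod 4, a ^ 2 + 3 * b ^ 2 = c * 2 → 2 * c = 0 := by decide
    have h4 := key x y p (by exact_mod_cast congrArg (Int.cast : ℤ → ZMod 4) hs)
    have : 4 ∣ 2 * p := (ZMod.natCast_eq_zero_iff _ 4).mp (by exact_mod_cast h4)
    have := hp.eq_one_or_self_of_dvd 2 (by omega)
    omega
  · obtain ⟨z, rfl⟩ : (3 : ℤ) ∣ x :=
      Int.prime_three.dvd_of_dvd_pow (n := 2) ⟨p - y ^ 2, by linear_combination hs⟩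
    exact ⟨y, z, mul_left_cancel₀ three_ne_zero (by linear_combination -hs)⟩

lemma Nat.Prime.exists_sq_add_twelve_mul_sq {p : ℕ} (hp : p.Prime) (hp12 : p % 12 = 1) :
    ∃ a b : ℤ, (p : ℤ) = a ^ 2 + 12 * b ^ 2 := by
  have := Fact.mk hp
  have := Fact.mk Nat.prime_three
  have hsq3 : IsSquare ((3 : ℕ) : ZMod p) := by
    rw [ZMod.exists_sq_eq_prime_iff_of_mod_four_eq_one (by omega) (by norm_num),
      ← ZMod.natCast_mod, show p % 3 = 1 by omega, Nat.cast_one]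
    exact ⟨1, by ring⟩
  have hsq : IsSquare (-3 : ZMod p) := by
    simpa using (ZMod.exists_sq_eq_neg_one_iff.mpr (by omega)).mul hsq3
  obtain ⟨x, y, hxy⟩ := hp.exists_sq_add_three_mul_sq (by omega) hsq
  obtain ⟨e, rfl | rfl⟩ := Int.even_or_odd' y
  · exact ⟨x, e, by linear_combination hxy⟩
  · have key : ∀ a b : ZMod 4, a ^ 2 + 3 * (2 * b + 1) ^ 2 ≠ 1 := by decide
    refine absurd ?_ (key x e)
    have h := congrArg (Int.cast : ℤ → ZMod 4) hxy
    push_cast at h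
    rw [← h, ← ZMod.natCast_mod, show p % 4 = 1 by omega, Nat.cast_one]

lemma eq_and_eq_or_eq_neg_and_eq_neg_of_dvd_mul_sub_mul {p d x y u v : ℤ} (hp : 0 < p)
    (hd : 1 < d) (hxy : p = x ^ 2 + d * y ^ 2) (huv : p = u ^ 2 + d * v ^ 2)
    (hdvd : p ∣ x * v - u * y) : (u = x ∧ v = y) ∨ (u = -x ∧ v = -y) := by
  have hid : p ^ 2 = (x * u + d * y * v) ^ 2 + d * (x * v - u * y) ^ 2 := by
    linear_combination p * hxy + (x ^ 2 + d * y ^ 2) * huv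
  have hzero : x * v - u * y = 0 := by
    by_contra hne
    have hle : p ≤ |x * v - u * y| := Int.le_of_dvd (abs_pos.mpr hne) ((dvd_abs _ _).mpr hdvd)
    nlinarith [sq_abs (x * v - u * y), mul_self_le_mul_self hp.le hle, sq_nonneg (x * u + d * y * v)]
  have hu : u * p = x * (x * u + d * y * v) := by
    linear_combination u * hxy - d * y * hzero
  have hv : v * p = y * (x * u + d * y * v) := by
    linear_combination v * hxy + x * hzero
  rcases sq_eq_sq_iff_eq_or_eq_neg.mp (by linear_combination -hid - d * (x * v - u * y) * hzero :
    (x * u + d * y * v) ^ 2 = p ^ 2) with h | h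
  · rw [h] at hu hv
    exact .inl ⟨mul_right_cancel₀ hp.ne' (by linear_combination hu),
      mul_right_cancel₀ hp.ne' (by linear_combination hv)⟩
  · rw [h] at hu hv
    exact .inr ⟨mul_right_cancel₀ hp.ne' (by linear_combination hu),
      mul_right_cancel₀ hp.ne' (by linear_combination hv)⟩

lemma Prime.sq_add_mul_sq_unique {p d : ℤ} (hp : Prime p) (hd : 1 < d) {x y u v : ℤ}
    (hxy : p = x ^ 2 + d * y ^ 2) (huv : p = u ^ 2 + d * v ^ 2) :
    (u = x ∨ u = -x) ∧ (v = y ∨ v = -y) := by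
  have hp0 : 0 < p := (hxy ▸ by positivity : 0 ≤ p).lt_of_ne' hp.ne_zero
  have hdvd : p ∣ (x * v - u * y) * (x * v + u * y) :=
    ⟨v ^ 2 - y ^ 2, by linear_combination (-v ^ 2) * hxy + y ^ 2 * huv⟩
  rcases hp.dvd_or_dvd hdvd with h | h
  · obtain ⟨hu, hv⟩ | ⟨hu, hv⟩ := eq_and_eq_or_eq_neg_and_eq_neg_of_dvd_mul_sub_mul hp0 hd hxy huv h
    exacts [⟨.inl hu, .inl hv⟩, ⟨.inr hu, .inr hv⟩]
  · obtain ⟨hu, hv⟩ | ⟨hu, hv⟩ := eq_and_eq_or_eq_neg_and_eq_neg_of_dvd_mul_sub_mul hp0 hd hxy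
      (u := u) (v := -v) (by linear_combination huv)
      (by rw [show x * -v - u * y = -(x * v + u * y) by ring]; exact h.neg_right)
    exacts [⟨.inl hu, .inr (by linarith)⟩, ⟨.inr hu, .inl (by linarith)⟩]

lemma Nat.Prime.gcd_eq_one_of_eq_sq_add_mul_sq {p : ℕ} (hp : p.Prime) {a b d : ℤ}
    (h : (p : ℤ) = a ^ 2 + d * b ^ 2) : Int.gcd a b = 1 := by
  have ha := Int.gcd_dvd_left a b
  have hb := Int.gcd_dvd_right a b
  have hdvd : Int.gcd a b * Int.gcd a b ∣ p := by
    rw [← Int.natCast_dvd_natCast, h]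
    push_cast
    rw [← sq]
    exact (pow_dvd_pow_of_dvd ha 2).add ((pow_dvd_pow_of_dvd hb 2).mul_left d)
  exact Nat.isUnit_iff.mp (hp.prime.squarefree _ hdvd)

lemma Nat.infinite_setOf_prime_and_forall_modEq {ι : Type*} [Fintype ι] {m : ι → ℕ}
    (hm0 : ∀ i, m i ≠ 0) (hm : Pairwise fun i j => (m i).Coprime (m j)) {a : ι → ℤ}
    (ha : ∀ i, IsCoprime (a i) (m i)) :
    {p : ℕ | p.Prime ∧ ∀ i, (p : ℤ) ≡ a i [ZMOD m i]}.Infinite := by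
  let e := ZMod.prodEquivPi m hm
  have : NeZero (∏ i, m i) := ⟨Finset.prod_ne_zero_iff.mpr fun i _ => hm0 i⟩
  have hunit : IsUnit (e.symm fun i => (a i : ZMod (m i))) := by
    refine (MulEquiv.isUnit_map e.symm).mpr (Pi.isUnit_iff.mpr fun i => ?_)
    have := NeZero.mk (hm0 i)
    exact (ZMod.coe_int_isUnit_iff_isCoprime _ _).mpr (ha i).symm
  refine (Nat.infinite_setOfPred_prime_and_eq_mod hunit).mono fun p hp => ⟨hp.1, fun i => ?_⟩
  rw [← ZMod.intCast_eq_intCast_iff]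
  have hpi := congrFun (congrArg e hp.2) i
  rw [RingEquiv.apply_symm_apply] at hpi
  simpa [e] using hpi

lemma exists_injective_prime_mod_three_eq_two (ι : Type*) [Fintype ι] (N : ℕ) :
    ∃ q : ι → ℕ, Function.Injective q ∧ ∀ i, (q i).Prime ∧ q i % 3 = 2 ∧ N < q i := by
  have hinf : {q : ℕ | q.Prime ∧ q % 3 = 2 ∧ N < q}.Infinite := by
    refine ((Nat.infinite_setOfPred_prime_and_modEq (q := 3) (a := 2) (by norm_num)
      (by norm_num)).sdiff (Set.finite_Iic N)).mono fun q hq => ⟨hq.1.1, hq.1.2, ?_⟩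
    simpa using hq.2
  let f := (Fintype.equivFin ι).toEmbedding.trans (Fin.valEmbedding.trans hinf.natEmbedding)
  exact ⟨fun i => f i, Subtype.val_injective.comp f.injective, fun i => (f i).2⟩


lemma Nat.infinite_setOf_prime_and_forall_exists_prime_mod_three_eq_two_dvd_add (K : Finset ℤ)
    (hK : 0 ∉ K) :
    {p : ℕ | p.Prime ∧ p % 12 = 1 ∧
      ∀ k ∈ K, ∃ q : ℕ, q.Prime ∧ q % 3 = 2 ∧ (q : ℤ) ∣ p + k}.Infinite := by
  obtain ⟨q, hq_inj, hq⟩ := exists_injective_prime_mod_three_eq_two K (K.sup Int.natAbs + 12)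
  have hq12 (k : K) : Nat.Coprime 12 (q k) :=
    ((hq k).1.coprime_iff_not_dvd.mpr fun h => by
      have := (hq k).2.2; have := Nat.le_of_dvd (by norm_num) h; omega).symm
  have hqk (k : K) : IsCoprime (k : ℤ) (q k) := by
    refine ((Nat.prime_iff_prime_int.mp (hq k).1).coprime_iff_not_dvd.mpr fun h => ?_).symm
    refine ne_of_mem_of_not_mem k.2 hK (Int.eq_zero_of_dvd_of_natAbs_lt_natAbs h ?_)
    have := Finset.le_sup (f := Int.natAbs) k.2
    have := (hq k).2.2
    rw [Int.natAbs_natCast]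
    omega
  -- `p ≡ 1 (mod 12)` and `p ≡ -k (mod q k)` for every `k ∈ K`
  let m : Option K → ℕ := fun i => i.elim 12 q
  let r : Option K → ℤ := fun i => i.elim 1 fun k => -k
  refine (Nat.infinite_setOf_prime_and_forall_modEq (m := m) (a := r) ?_ ?_ ?_).mono
    fun p hp => ⟨hp.1, ?_, fun k hk => ⟨q ⟨k, hk⟩, (hq _).1, (hq _).2.1, ?_⟩⟩
  · rintro (_ | k) <;> simp [m, (hq _).1.ne_zero]
  · rintro (_ | k) (_ | k') hne
    exacts [absurd rfl hne, hq12 k', (hq12 k).symm, (Nat.coprime_primes (hq k).1 (hq k').1).mpr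
      (hq_inj.ne fun h => hne (h ▸ rfl))]
  · rintro (_ | k)
    exacts [isCoprime_one_left, (hqk k).neg_left]
  · have := hp.2 none
    simp only [Int.ModEq, m, r, Option.elim_none] at this
    omega
  · simpa [m, r] using (hp.2 (some ⟨k, hk⟩)).symm.dvd

theorem stmt_6_general (g : ℤ) :
    {p : ℕ | p.Prime ∧
      (∃ a b : ℤ, Int.gcd a b = 1 ∧ (p : ℤ) = a ^ 2 + 12 * b ^ 2 ∧
        ∀ a' b' : ℤ, (p : ℤ) = a' ^ 2 + 12 * b' ^ 2 →
          (a' = a ∨ a' = -a) ∧ (b' = b ∨ b' = -b)) ∧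
      (∀ k : ℤ, 0 < |k| → |k| ≤ g →
        ¬ ∃ a b : ℤ, Int.gcd a b = 1 ∧ (p : ℤ) + k = a ^ 2 + a * b + b ^ 2) ∧
      (¬ ∃ a b : ℤ, Int.gcd a b = 1 ∧
        (p : ℤ) = 4 * (a ^ 2 + a * b + b ^ 2))}.Infinite := by
  refine (Nat.infinite_setOf_prime_and_forall_exists_prime_mod_three_eq_two_dvd_add
    ((Finset.Icc (-g) g).erase 0) (Finset.notMem_erase 0 _)).mono ?_
  rintro p ⟨hp, hp12, hq⟩
  refine ⟨hp, ?_, fun k hk0 hkg => ?_, ?_⟩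
  · obtain ⟨a, b, hab⟩ := hp.exists_sq_add_twelve_mul_sq hp12
    exact ⟨a, b, hp.gcd_eq_one_of_eq_sq_add_mul_sq hab, hab, fun a' b' h =>
      (Nat.prime_iff_prime_int.mp hp).sq_add_mul_sq_unique (by norm_num) hab h⟩
  · rintro ⟨x, y, hxy, hk⟩
    obtain ⟨q, hq, hq3, hdvd⟩ := hq k
      (Finset.mem_erase.mpr ⟨abs_pos.mp hk0, Finset.mem_Icc.mpr (abs_le.mp hkg)⟩)
    exact hq.mod_three_ne_two_of_dvd_sq_add_mul_add_sq hxy (hk ▸ hdvd) hq3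
  · rintro ⟨x, y, -, h⟩
    omega

/-- For every integer `g > 0` there are infinitely many primes `p` such that:
(i) `p = a² + 12 b²` for some relatively prime integers `a, b`, and every integer solution
`(a', b')` of `p = a'² + 12 b'²` satisfies `a' = ±a` and `b' = ±b`;
(ii) for `0 < |k| ≤ g`, the integer `p + k` has no primitive representation as `a² + a b + b²`;
(iii) `p` has no primitive representation as `4(a² + a b + b²)`. -/
theorem stmt_6 (g : ℤ) (hg : 0 < g) :
    {p : ℕ | p.Prime ∧
      (∃ a b : ℤ, Int.gcd a b = 1 ∧ (p : ℤ) = a ^ 2 + 12 * b ^ 2 ∧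
        ∀ a' b' : ℤ, (p : ℤ) = a' ^ 2 + 12 * b' ^ 2 →
          (a' = a ∨ a' = -a) ∧ (b' = b ∨ b' = -b)) ∧
      (∀ k : ℤ, 0 < |k| → |k| ≤ g →
        ¬ ∃ a b : ℤ, Int.gcd a b = 1 ∧ (p : ℤ) + k = a ^ 2 + a * b + b ^ 2) ∧
      (¬ ∃ a b : ℤ, Int.gcd a b = 1 ∧
        (p : ℤ) = 4 * (a ^ 2 + a * b + b ^ 2))}.Infinite :=
  stmt_6_general g
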